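/- Let X be a linear cycle set, A an abelian group, (f,g) a 2-cocycle, E = X ⊕_{f,g} A, φ ∈ Aut(X), θ ∈ Aut(A), and λ : X → A a map. Then ψ : E → E given by ψ(x,a) = (φ(x), λ(x)+θ(a)) is an automorphism of E if and only if for all x,y ∈ X: λ(x+y) + θ(g(x,y)) = λ(x) + λ(y) + g(φ(x),φ(y)) and λ(x·y) + θ(f(x,y)) = λ(y) + f(φ(x),φ(y)). -/

import Mathlib

/-- A (left) linear cycle set on an abelian group `X`. -/
structure LCS (X : Type*) [AddCommGroup X] where
  dot : X → X → X
  bij : ∀ x, Function.Bijective (dot x)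
  cyc : ∀ x y z, dot (dot x y) (dot x z) = dot (dot y x) (dot y z)
  dot_add : ∀ x y z, dot x (y + z) = dot x y + dot x z
  add_dot : ∀ x y z, dot (x + y) z = dot (dot x y) (dot x z)

/-- 2-cocycle conditions for a linear cycle set with coefficients in `A`. -/
def IsCocycle {X A : Type*} [AddCommGroup X] [AddCommGroup A] (L : LCS X)
    (f g : X → X → A) : Prop :=
  (∀ x y, g x y = g y x) ∧
  (∀ x y z, g x y + g (x + y) z = g y z + g x (y + z)) ∧
  (∀ x y z, f (x + y) z = f (L.dot x y) (L.dot x z) + f x z) ∧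
  (∀ x y z, f x (y + z) - f x y - f x z = g (L.dot x y) (L.dot x z) - g y z)

/-- Normalised 2-cocycles, as an additive subgroup of pairs of maps. -/
def Zn {X : Type*} [AddCommGroup X] (L : LCS X) (A : Type*) [AddCommGroup A] :
    AddSubgroup ((X → X → A) × (X → X → A)) where
  carrier := {p | IsCocycle L p.1 p.2 ∧ p.2 0 0 = 0}
  zero_mem' := by
    refine ⟨⟨?_, ?_, ?_, ?_⟩, ?_⟩ <;> intros <;> simp
  add_mem' := by
    rintro p q ⟨⟨hp1, hp2, hp3, hp4⟩, hp5⟩ ⟨⟨hq1, hq2, hq3, hq4⟩, hq5⟩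
    refine ⟨⟨?_, ?_, ?_, ?_⟩, ?_⟩ <;> intros <;>
      simp only [Prod.fst_add, Prod.snd_add, Pi.add_apply]
    · rw [hp1, hq1]
    · rw [show ∀ a b c d : A, a + b + (c + d) = (a + c) + (b + d) by intros; abel,
        hp2, hq2]; abel
    · rw [hp3, hq3]; abel
    · rw [show ∀ a b c d e h : A, a + b - (c + d) - (e + h) = (a - c - e) + (b - d - h)
        by intros; abel, hp4, hq4]; abel
    · rw [hp5, hq5]; simp
  neg_mem' := by
    rintro p ⟨⟨hp1, hp2, hp3, hp4⟩, hp5⟩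
    refine ⟨⟨?_, ?_, ?_, ?_⟩, ?_⟩ <;> intros <;>
      simp only [Prod.fst_neg, Prod.snd_neg, Pi.neg_apply]
    · rw [hp1]
    · rw [show ∀ a b : A, -a + -b = -(a + b) by intros; abel, hp2]; abel
    · rw [hp3]; abel
    · rw [show ∀ a b c : A, -a - -b - -c = -(a - b - c) by intros; abel, hp4]; abel
    · rw [hp5]; simp

/-- Normalised 2-coboundaries. -/
def Bn {X : Type*} [AddCommGroup X] (L : LCS X) (A : Type*) [AddCommGroup A] :
    AddSubgroup ((X → X → A) × (X → X → A)) where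
  carrier := {p | ∃ l : X → A, l 0 = 0 ∧ (∀ x y, p.1 x y = l (L.dot x y) - l y) ∧
      (∀ x y, p.2 x y = l (x + y) - l x - l y)}
  zero_mem' := ⟨0, by simp⟩
  add_mem' := by
    rintro p q ⟨l, hl0, hl1, hl2⟩ ⟨m, hm0, hm1, hm2⟩
    refine ⟨l + m, by simp [hl0, hm0], fun x y => ?_, fun x y => ?_⟩ <;>
      simp only [Prod.fst_add, Prod.snd_add, Pi.add_apply, hl1, hm1, hl2, hm2] <;> abel
  neg_mem' := by
    rintro p ⟨l, hl0, hl1, hl2⟩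
    refine ⟨-l, by simp [hl0], fun x y => ?_, fun x y => ?_⟩ <;>
      simp only [Prod.fst_neg, Prod.snd_neg, Pi.neg_apply, hl1, hl2] <;> abel

/-- The second normalised linear cycle set cohomology group. -/
abbrev H2N {X : Type*} [AddCommGroup X] (L : LCS X) (A : Type*) [AddCommGroup A] :=
  Zn L A ⧸ (Bn L A).addSubgroupOf (Zn L A)

/-- Symmetric group 2-cocycles of the abelian group `X` with trivial coefficients `A`. -/
def Zsym (X : Type*) [AddCommGroup X] (A : Type*) [AddCommGroup A] :
    AddSubgroup (X → X → A) where
  carrier := {g | (∀ x y, g x y = g y x) ∧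
      ∀ x y z, g x y + g (x + y) z = g y z + g x (y + z)}
  zero_mem' := by refine ⟨?_, ?_⟩ <;> intros <;> simp
  add_mem' := by
    rintro p q ⟨hp1, hp2⟩ ⟨hq1, hq2⟩
    refine ⟨?_, ?_⟩ <;> intros <;> simp only [Pi.add_apply]
    · rw [hp1, hq1]
    · rw [show ∀ a b c d : A, a + b + (c + d) = (a + c) + (b + d) by intros; abel,
        hp2, hq2]; abel
  neg_mem' := by
    rintro p ⟨hp1, hp2⟩
    refine ⟨?_, ?_⟩ <;> intros <;> simp only [Pi.neg_apply]
    · rw [hp1]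
    · rw [show ∀ a b : A, -a + -b = -(a + b) by intros; abel, hp2]; abel

/-- Symmetric group 2-coboundaries. -/
def Bsym (X : Type*) [AddCommGroup X] (A : Type*) [AddCommGroup A] :
    AddSubgroup (X → X → A) where
  carrier := {g | ∃ l : X → A, ∀ x y, g x y = l (x + y) - l x - l y}
  zero_mem' := ⟨0, by simp⟩
  add_mem' := by
    rintro p q ⟨l, hl⟩ ⟨m, hm⟩
    exact ⟨l + m, fun x y => by simp only [Pi.add_apply, hl, hm]; abel⟩
  neg_mem' := by
    rintro p ⟨l, hl⟩
    exact ⟨-l, fun x y => by simp only [Pi.neg_apply, hl]; abel⟩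

/-- The second symmetric cohomology group of an abelian group. -/
abbrev H2sym (X : Type*) [AddCommGroup X] (A : Type*) [AddCommGroup A] :=
  Zsym X A ⧸ (Bsym X A).addSubgroupOf (Zsym X A)

/-- The multiplicative group structure on `AddAut M` (composition), as in older Mathlib. -/
instance AddAut.group (M : Type*) [Add M] : Group (AddAut M) where
  mul g h := AddEquiv.trans h g
  one := AddEquiv.refl _
  inv := AddEquiv.symm
  mul_assoc _ _ _ := rfl
  one_mul _ := rfl
  mul_one _ := rfl
  inv_mul_cancel := AddEquiv.self_trans_symm

@[simp]
theorem addAut_mul_apply {M : Type*} [Add M] (e₁ e₂ : AddAut M) (m : M) :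
    (e₁ * e₂) m = e₁ (e₂ m) := rfl

@[simp]
theorem addAut_one_apply {M : Type*} [Add M] (m : M) : (1 : AddAut M) m = m := rfl

@[simp]
theorem addAut_apply_inv_self {M : Type*} [Add M] (e : AddAut M) (m : M) : e (e⁻¹ m) = m :=
  e.apply_symm_apply m

@[simp]
theorem addAut_inv_apply_self {M : Type*} [Add M] (e : AddAut M) (m : M) : e⁻¹ (e m) = m :=
  e.symm_apply_apply m

/-- Linear cycle set automorphisms, as a subgroup of the additive automorphisms. -/
def LCSAut {X : Type*} [AddCommGroup X] (L : LCS X) : Subgroup (AddAut X) where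
  carrier := {φ | ∀ x y, φ (L.dot x y) = L.dot (φ x) (φ y)}
  one_mem' := by intro x y; rfl
  mul_mem' := by
    intro a b ha hb x y
    simp only [addAut_mul_apply]
    rw [hb x y, ha]
  inv_mem' := by
    intro a ha x y
    apply a.injective
    rw [ha]
    simp

/-- The transported pair of maps under a pair of automorphisms. -/
def transport {X A : Type*} [AddCommGroup X] [AddCommGroup A]
    (φ : AddAut X) (θ : AddAut A) (p : (X → X → A) × (X → X → A)) :
    (X → X → A) × (X → X → A) :=
  (fun x y => θ (p.1 (φ⁻¹ x) (φ⁻¹ y)), fun x y => θ (p.2 (φ⁻¹ x) (φ⁻¹ y)))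

/-- Addition on the extension `X ⊕_{f,g} A`. -/
def addE {X A : Type*} [AddCommGroup X] [AddCommGroup A] (g : X → X → A)
    (p q : X × A) : X × A :=
  (p.1 + q.1, p.2 + q.2 + g p.1 q.1)

/-- Cycle set operation on the extension `X ⊕_{f,g} A`. -/
def dotE {X A : Type*} [AddCommGroup X] [AddCommGroup A] (L : LCS X) (f : X → X → A)
    (p q : X × A) : X × A :=
  (L.dot p.1 q.1, q.2 + f p.1 q.1)

/-- Normalised 1-cocycles. -/
def Z1 {X : Type*} [AddCommGroup X] (L : LCS X) (A : Type*) [AddCommGroup A] :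
    AddSubgroup (X → A) where
  carrier := {l | (∀ x y, l (x + y) = l x + l y) ∧ ∀ x y, l (L.dot x y) = l y}
  zero_mem' := by refine ⟨?_, ?_⟩ <;> intros <;> simp
  add_mem' := by
    rintro p q ⟨hp1, hp2⟩ ⟨hq1, hq2⟩
    refine ⟨?_, ?_⟩ <;> intros <;> simp only [Pi.add_apply, hp1, hq1, hp2, hq2] <;> abel
  neg_mem' := by
    rintro p ⟨hp1, hp2⟩
    refine ⟨?_, ?_⟩ <;> intros <;> simp only [Pi.neg_apply, hp1, hp2] <;> abel

/-- The subgroup `Aut_A(E)` of the permutation group of `E = X ⊕_{f,g} A`. -/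
def AutAE {X A : Type*} [AddCommGroup X] [AddCommGroup A] (L : LCS X)
    (f g : X → X → A) : Subgroup (Equiv.Perm (X × A)) where
  carrier := {ψ | (∀ p q, ψ (addE g p q) = addE g (ψ p) (ψ q)) ∧
      (∀ p q, ψ (dotE L f p q) = dotE L f (ψ p) (ψ q)) ∧
      ∃ φ ∈ LCSAut L, ∃ θ : AddAut A, ∃ l : X → A, ∀ x a, ψ (x, a) = (φ x, l x + θ a)}
  one_mem' := by
    refine ⟨fun p q => rfl, fun p q => rfl, 1, one_mem _, 1, 0, fun x a => by simp⟩
  mul_mem' := by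
    rintro a b ⟨ha1, ha2, φa, hφa, θa, la, ha3⟩ ⟨hb1, hb2, φb, hφb, θb, lb, hb3⟩
    refine ⟨fun p q => ?_, fun p q => ?_, φa * φb, mul_mem hφa hφb, θa * θb,
      fun x => la (φb x) + θa (lb x), fun x a => ?_⟩
    · simp only [Equiv.Perm.mul_apply, hb1, ha1]
    · simp only [Equiv.Perm.mul_apply, hb2, ha2]
    · simp only [Equiv.Perm.mul_apply, hb3, ha3, addAut_mul_apply, map_add]
      abel_nf
  inv_mem' := by
    rintro ψ ⟨h1, h2, φ, hφ, θ, l, h3⟩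
    refine ⟨fun p q => ?_, fun p q => ?_, φ⁻¹, inv_mem hφ, θ⁻¹,
      fun x => -θ⁻¹ (l (φ⁻¹ x)), fun x a => ?_⟩
    · apply ψ.injective
      simp only [Equiv.Perm.coe_inv, Equiv.apply_symm_apply, h1]
    · apply ψ.injective
      simp only [Equiv.Perm.coe_inv, Equiv.apply_symm_apply, h2]
    · apply ψ.injective
      rw [show ψ (ψ⁻¹ (x, a)) = (x, a) from ψ.apply_symm_apply (x, a), h3]
      simp

/-- A predicate packaging the linear cycle set axioms for a pair of binary operations. -/
structure IsLCSOps {Y : Type*} (add : Y → Y → Y) (dot : Y → Y → Y) : Prop where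
  add_assoc : ∀ a b c, add (add a b) c = add a (add b c)
  add_comm : ∀ a b, add a b = add b a
  zero_exists : ∃ e, (∀ a, add e a = a) ∧ ∀ a, ∃ b, add a b = e
  bij : ∀ a, Function.Bijective (dot a)
  cyc : ∀ a b c, dot (dot a b) (dot a c) = dot (dot b a) (dot b c)
  dot_add : ∀ a b c, dot a (add b c) = add (dot a b) (dot a c)
  add_dot : ∀ a b c, dot (add a b) c = dot (dot a b) (dot a c)

/-- The trivial linear cycle set on an abelian group. -/
def trivLCS (X : Type*) [AddCommGroup X] : LCS X where
  dot := fun _ y => y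
  bij := fun _ => Function.bijective_id
  cyc := fun _ _ _ => rfl
  dot_add := fun _ _ _ => rfl
  add_dot := fun _ _ _ => rfl

/-!
`ψ` is a shear of `φ × θ`, hence bijective. Comparing second coordinates of the two
compatibility identities at `(x, 0)` and `(y, 0)` gives the two conditions; conversely, since
`θ` is additive, the `θ a` and `θ b` terms cancel from both sides, leaving exactly the conditions.
-/

def extensionMap {X Y A B : Type*} [Add B] (φ : X → Y) (θ : A → B) (l : X → B) (p : X × A) :
    Y × B :=
  (φ p.1, l p.1 + θ p.2)

theorem extensionMap_bijective {X Y A B : Type*} [AddGroup B] {φ : X → Y} {θ : A → B}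
    (hφ : Function.Bijective φ) (hθ : Function.Bijective θ) (l : X → B) :
    Function.Bijective (extensionMap φ θ l) :=
  (Equiv.prodShear (Equiv.ofBijective φ hφ) fun x =>
    (Equiv.ofBijective θ hθ).trans (Equiv.addLeft (l x))).bijective

section ExtensionMap

variable {X Y A B : Type*} [AddCommGroup X] [AddCommGroup Y] [AddCommGroup A] [AddCommGroup B]

theorem extensionMap_addE_iff (φ : X →+ Y) (θ : A →+ B) (l : X → B) (g : X → X → A)
    (g' : Y → Y → B) :
    (∀ p q, extensionMap φ θ l (addE g p q) =
        addE g' (extensionMap φ θ l p) (extensionMap φ θ l q)) ↔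
      ∀ x y, l (x + y) + θ (g x y) = l x + l y + g' (φ x) (φ y) := by
  constructor
  · intro h x y
    simpa [extensionMap, addE] using congrArg Prod.snd (h (x, 0) (y, 0))
  · rintro h ⟨x, a⟩ ⟨y, b⟩
    refine Prod.ext (map_add φ x y) ?_
    simp only [extensionMap, addE, map_add]
    linear_combination (norm := abel) h x y

theorem extensionMap_dotE_iff (L : LCS X) (L' : LCS Y) (φ : X →+ Y)
    (hφ : ∀ x y, φ (L.dot x y) = L'.dot (φ x) (φ y)) (θ : A →+ B) (l : X → B)
    (f : X → X → A) (f' : Y → Y → B) :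
    (∀ p q, extensionMap φ θ l (dotE L f p q) =
        dotE L' f' (extensionMap φ θ l p) (extensionMap φ θ l q)) ↔
      ∀ x y, l (L.dot x y) + θ (f x y) = l y + f' (φ x) (φ y) := by
  constructor
  · intro h x y
    simpa [extensionMap, dotE] using congrArg Prod.snd (h (x, 0) (y, 0))
  · rintro h ⟨x, a⟩ ⟨y, b⟩
    refine Prod.ext (hφ x y) ?_
    simp only [extensionMap, dotE, map_add]
    linear_combination (norm := abel) h x y

end ExtensionMap

theorem automorphism_iff_conditions_general {X A : Type*} [AddCommGroup X] [AddCommGroup A]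
    (L : LCS X) (f g : X → X → A)
    (φ : AddAut X) (hφ : φ ∈ LCSAut L) (θ : AddAut A) (l : X → A) :
    (Function.Bijective (fun p : X × A => ((φ p.1, l p.1 + θ p.2) : X × A)) ∧
     (∀ p q : X × A,
        ((φ (addE g p q).1, l (addE g p q).1 + θ (addE g p q).2) : X × A) =
          addE g (φ p.1, l p.1 + θ p.2) (φ q.1, l q.1 + θ q.2)) ∧
     (∀ p q : X × A,
        ((φ (dotE L f p q).1, l (dotE L f p q).1 + θ (dotE L f p q).2) : X × A) =
          dotE L f (φ p.1, l p.1 + θ p.2) (φ q.1, l q.1 + θ q.2))) ↔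
    ((∀ x y, l (x + y) + θ (g x y) = l x + l y + g (φ x) (φ y)) ∧
     (∀ x y, l (L.dot x y) + θ (f x y) = l y + f (φ x) (φ y))) :=
  (and_iff_right (extensionMap_bijective φ.bijective θ.bijective l)).trans
    (and_congr (extensionMap_addE_iff φ.toAddMonoidHom θ.toAddMonoidHom l g g)
      (extensionMap_dotE_iff L L φ.toAddMonoidHom hφ θ.toAddMonoidHom l f f))

theorem automorphism_iff_conditions {X A : Type*} [AddCommGroup X] [AddCommGroup A]
    (L : LCS X) (f g : X → X → A) (hfg : IsCocycle L f g)
    (φ : AddAut X) (hφ : φ ∈ LCSAut L) (θ : AddAut A) (l : X → A) :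
    (Function.Bijective (fun p : X × A => ((φ p.1, l p.1 + θ p.2) : X × A)) ∧
     (∀ p q : X × A,
        ((φ (addE g p q).1, l (addE g p q).1 + θ (addE g p q).2) : X × A) =
          addE g (φ p.1, l p.1 + θ p.2) (φ q.1, l q.1 + θ q.2)) ∧
     (∀ p q : X × A,
        ((φ (dotE L f p q).1, l (dotE L f p q).1 + θ (dotE L f p q).2) : X × A) =
          dotE L f (φ p.1, l p.1 + θ p.2) (φ q.1, l q.1 + θ q.2))) ↔
    ((∀ x y, l (x + y) + θ (g x y) = l x + l y + g (φ x) (φ y)) ∧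
     (∀ x y, l (L.dot x y) + θ (f x y) = l y + f (φ x) (φ y))) :=
  automorphism_iff_conditions_general L f g φ hφ θ l
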